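/- arXiv:2505.08020 — 6 statements merged into one kernel-verified Lean document; each statement's English description precedes it below -/
import Mathlib

section
/- Let G be a connected graph and L a list-assignment such that |L(v)| ≥ deg(v) for all vertices v and |L(w)| ≥ deg(w)+1 for at least one vertex w. Then G admits a proper L-colouring. -/
/-!
Remove vertices one at a time, each time one with fewer neighbours among the remaining vertices
than colours in its list, and colour them greedily in the reverse order. Such a vertex exists in every nonempty vertex set `S`: if `S` is
everything, take `w`; otherwise, by connectivity, some `v ∈ S` has a neighbour outside `S`, so
fewer than `deg v ≤ |L v|` of its neighbours lie in `S`.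
-/

/-- A proper list colouring: every vertex gets a colour from its list,
adjacent vertices get different colours. -/
def properL {V : Type*} (G : SimpleGraph V) (L : V → Finset ℕ) (c : V → ℕ) : Prop :=
  (∀ v, c v ∈ L v) ∧ ∀ ⦃u w⦄, G.Adj u w → c u ≠ c w

section Greedy

variable {V : Type*} (G : SimpleGraph V) (L : V → Finset ℕ)

theorem exists_listColouring_on_of_forall_exists_ncard_lt
    (h : ∀ S : Finset V, S.Nonempty → ∃ v ∈ S, (G.neighborSet v ∩ S).ncard < (L v).card)
    (S : Finset V) :
    ∃ c : V → ℕ, (∀ v ∈ S, c v ∈ L v) ∧ ∀ u ∈ S, ∀ v ∈ S, G.Adj u v → c u ≠ c v := by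
  classical
  induction S using Finset.strongInduction with
  | H S ih =>
    rcases S.eq_empty_or_nonempty with rfl | hS
    · exact ⟨0, by simp, by simp⟩
    obtain ⟨v, hvS, hv⟩ := h S hS
    obtain ⟨c, hcL, hcG⟩ := ih (S.erase v) (Finset.erase_ssubset hvS)
    have hforbidden : (c '' (G.neighborSet v ∩ S)).ncard < ((L v : Set ℕ)).ncard := by
      rw [Set.ncard_coe_finset]
      exact (Set.ncard_image_le (Set.toFinite _)).trans_lt hv
    obtain ⟨a, haL, ha⟩ := Set.exists_mem_notMem_of_ncard_lt_ncard hforbidden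
    have hfresh : ∀ u ∈ S.erase v, G.Adj v u → c u ≠ a := fun u hu hvu hua =>
      ha ⟨u, ⟨hvu, Finset.mem_of_mem_erase hu⟩, hua⟩
    refine ⟨Function.update c v a, fun u hu => ?_, fun u hu x hx hux => ?_⟩
    · rcases eq_or_ne u v with rfl | huv
      · simpa using haL
      · simpa [huv] using hcL u (Finset.mem_erase.2 ⟨huv, hu⟩)
    · by_cases huv : u = v <;> by_cases hxv : x = v
      · exact absurd (huv.trans hxv.symm) (G.ne_of_adj hux)
      · subst huv
        simpa [hxv] using (hfresh x (Finset.mem_erase.2 ⟨hxv, hx⟩) hux).symm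
      · subst hxv
        simpa [huv] using hfresh u (Finset.mem_erase.2 ⟨huv, hu⟩) hux.symm
      · simpa [huv, hxv] using
          hcG u (Finset.mem_erase.2 ⟨huv, hu⟩) x (Finset.mem_erase.2 ⟨hxv, hx⟩) hux

theorem exists_properL_of_forall_exists_ncard_lt [Fintype V]
    (h : ∀ S : Finset V, S.Nonempty → ∃ v ∈ S, (G.neighborSet v ∩ S).ncard < (L v).card) :
    ∃ c : V → ℕ, properL G L c := by
  obtain ⟨c, hcL, hcG⟩ := exists_listColouring_on_of_forall_exists_ncard_lt G L h Finset.univ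
  exact ⟨c, fun v => hcL v (Finset.mem_univ v),
    fun u v huv => hcG u (Finset.mem_univ u) v (Finset.mem_univ v) huv⟩

end Greedy

theorem SimpleGraph.Connected.exists_adj_of_mem_of_notMem {V : Type*} {G : SimpleGraph V}
    (hG : G.Connected) {S : Set V} {u x : V} (hu : u ∈ S) (hx : x ∉ S) :
    ∃ v ∈ S, ∃ y ∉ S, G.Adj v y := by
  obtain ⟨p⟩ := hG u x
  obtain ⟨d, -, hd, hd'⟩ := p.exists_boundary_dart S hu hx
  exact ⟨d.fst, hd, d.snd, hd', d.adj⟩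

theorem stmt0 {V : Type*} [Fintype V] (G : SimpleGraph V) (hG : G.Connected)
    (L : V → Finset ℕ)
    (h1 : ∀ v, (G.neighborSet v).ncard ≤ (L v).card)
    (h2 : ∃ w, (G.neighborSet w).ncard + 1 ≤ (L w).card) :
    ∃ c : V → ℕ, properL G L c := by
  refine exists_properL_of_forall_exists_ncard_lt G L fun S ⟨u, hu⟩ => ?_
  by_cases hS : ∀ x, x ∈ S
  · obtain ⟨w, hw⟩ := h2
    refine ⟨w, hS w, ?_⟩
    rw [Set.inter_eq_left.2 fun x _ => hS x]
    omega
  · push Not at hS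
    obtain ⟨x, hx⟩ := hS
    obtain ⟨v, hv, y, hy, hvy⟩ :=
      hG.exists_adj_of_mem_of_notMem (S := (S : Set V)) (Finset.mem_coe.2 hu) hx
    have hproper : G.neighborSet v ∩ S ⊂ G.neighborSet v :=
      (Set.ssubset_iff_of_subset Set.inter_subset_left).2 ⟨y, hvy, fun hyS => hy hyS.2⟩
    exact ⟨v, hv, (Set.ncard_lt_ncard hproper).trans_le (h1 v)⟩
end

section
/- Let G be a connected graph, L a list-assignment with |L(v)| ≥ deg(v)+1 for all v, and α a proper L-colouring of G. Fix vertices v, w with d = dist(v,w) and a shortest v,w-path P. If v is unfrozen under α, then there is a sequence of at most d single-vertex recolourings, each recolouring only vertices of V(P) \ {w}, transforming α into a proper L-colouring γ under which w is unfrozen. -/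
/-- Vertex `v` is unfrozen under `c`. -/
def unfrozenAt {V : Type*} (G : SimpleGraph V) (L : V → Finset ℕ) (c : V → ℕ) (v : V) : Prop :=
  ∃ b ∈ L v, b ≠ c v ∧ ∀ u, G.Adj v u → c u ≠ b

/-- A single-vertex recolouring at vertex `x`: both colourings are proper `L`-colourings,
they differ at `x`, and agree everywhere else. -/
def recolStepAt {V : Type*} (G : SimpleGraph V) (L : V → Finset ℕ)
    (c c' : V → ℕ) (x : V) : Prop :=
  properL G L c ∧ properL G L c' ∧ c x ≠ c' x ∧ ∀ u, u ≠ x → c u = c' u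

section Aux

variable {V : Type*} [Fintype V] [DecidableEq V] (G : SimpleGraph V) (L : V → Finset ℕ)

lemma update_properL (α : V → ℕ) (hα : properL G L α) {v : V} {b : ℕ}
    (hb : b ∈ L v) (hb2 : ∀ u, G.Adj v u → α u ≠ b) :
    properL G L (Function.update α v b) := by
  constructor
  · intro u
    rcases eq_or_ne u v with rfl | hne
    · simpa using hb
    · simpa [Function.update_of_ne hne] using hα.1 u
  · intro u u' hadj
    rcases eq_or_ne u v with rfl | hne
    · have hne' : u' ≠ u := (G.ne_of_adj hadj).symm
      simp only [Function.update_self, Function.update_of_ne hne']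
      exact fun h => hb2 u' hadj h.symm
    · rcases eq_or_ne u' v with rfl | hne'
      · simp only [Function.update_self, Function.update_of_ne hne]
        exact fun h => hb2 u hadj.symm h
      · simpa [Function.update_of_ne hne, Function.update_of_ne hne'] using hα.2 hadj

/-- Recolouring an unfrozen neighbour of a frozen vertex `x` unfreezes `x`. -/
lemma frozen_step [DecidableRel G.Adj]
    (hL : ∀ u, (G.neighborSet u).ncard + 1 ≤ (L u).card)
    (α : V → ℕ) (hα : properL G L α) {v x : V} (h : G.Adj v x)
    (hfr : ¬ unfrozenAt G L α x) {b : ℕ} (hbne : b ≠ α v)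
    (hb2 : ∀ u, G.Adj v u → α u ≠ b) :
    unfrozenAt G L (Function.update α v b) x := by
  have hfr' : ∀ c ∈ L x, c ≠ α x → ∃ u, G.Adj x u ∧ α u = c := by
    intro c hc hcne
    by_contra hcon
    push_neg at hcon
    exact hfr ⟨c, hc, hcne, fun u hu hh => hcon u hu hh⟩
  set N := G.neighborFinset x with hN
  have hNcard : (G.neighborSet x).ncard = N.card := by
    rw [hN, SimpleGraph.neighborFinset_def, Set.ncard_eq_toFinset_card']
  set S := (L x).erase (α x) with hSdef
  have hSsub : S ⊆ N.image α := by
    intro c hc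
    obtain ⟨u, hu, rfl⟩ := hfr' c (Finset.mem_of_mem_erase hc)
      (Finset.ne_of_mem_erase hc)
    exact Finset.mem_image_of_mem α ((G.mem_neighborFinset x u).mpr hu)
  have hScard : N.card ≤ S.card := by
    have := hL x
    have h1 : (L x).card - 1 ≤ S.card := by
      rw [hSdef]
      have := Finset.pred_card_le_card_erase (s := L x) (a := α x)
      omega
    omega
  have himle : (N.image α).card ≤ N.card := Finset.card_image_le
  have hSeq : S = N.image α :=
    Finset.eq_of_subset_of_card_le hSsub (le_trans himle hScard)
  have himinj : Set.InjOn α N := by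
    apply Finset.card_image_iff.mp
    have : S.card ≤ (N.image α).card := le_of_eq (by rw [hSeq])
    omega
  have hvN : v ∈ N := (G.mem_neighborFinset x v).mpr h.symm
  have havS : α v ∈ S := by rw [hSeq]; exact Finset.mem_image_of_mem α hvN
  refine ⟨α v, Finset.mem_of_mem_erase havS, ?_, ?_⟩
  · have hxv : x ≠ v := fun he => G.irrefl (he ▸ h)
    rw [Function.update_of_ne hxv]
    exact Finset.ne_of_mem_erase havS
  · intro u hu
    rcases eq_or_ne u v with rfl | hne
    · simpa using hbne
    · rw [Function.update_of_ne hne]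
      intro hh
      exact hne (himinj ((G.mem_neighborFinset x u).mpr hu) hvN hh)

lemma aux_main (hG : G.Connected)
    (hL : ∀ u, (G.neighborSet u).ncard + 1 ≤ (L u).card) :
    ∀ {v w : V} (P : G.Walk v w), P.IsPath → P.length = G.dist v w →
    ∀ (α : V → ℕ), properL G L α → unfrozenAt G L α v →
    ∃ (k : ℕ) (f : ℕ → V → ℕ), k ≤ G.dist v w ∧ f 0 = α ∧
      (∀ i < k, ∃ x ∈ P.support, x ≠ w ∧ recolStepAt G L (f i) (f (i + 1)) x) ∧
      unfrozenAt G L (f k) w := by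
  classical
  haveI : DecidableRel G.Adj := Classical.decRel _
  intro v w P
  induction P with
  | nil =>
    intro _ _ α hα hv
    exact ⟨0, fun _ => α, Nat.zero_le _, rfl, by omega, hv⟩
  | @cons v x w h P' ih =>
    intro hP hlen α hα hv
    have hP' : P'.IsPath := hP.of_cons
    have hlen' : (SimpleGraph.Walk.cons h P').length = P'.length + 1 :=
      SimpleGraph.Walk.length_cons _ _
    have hd1 : G.dist x w ≤ P'.length := SimpleGraph.dist_le P'
    have hd2 : G.dist v w ≤ 1 + G.dist x w := by
      have t := hG.dist_triangle (u := v) (v := x) (w := w)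
      have : G.dist v x ≤ 1 := by
        simpa using SimpleGraph.dist_le h.toWalk
      omega
    have hdvw : G.dist v w = P'.length + 1 := by rw [← hlen, hlen']
    have hdxw : P'.length = G.dist x w := by omega
    -- two cases on whether x is unfrozen under α
    by_cases hx : unfrozenAt G L α x
    · obtain ⟨k, f, hk, hf0, hsteps, hw⟩ := ih hP' hdxw α hα hx
      refine ⟨k, f, by omega, hf0, ?_, hw⟩
      intro i hi
      obtain ⟨y, hy, hyw, hst⟩ := hsteps i hi
      exact ⟨y, by simp [SimpleGraph.Walk.support_cons, hy], hyw, hst⟩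
    · obtain ⟨b, hbL, hbne, hb2⟩ := hv
      set α' := Function.update α v b with hα'def
      have hα' : properL G L α' := update_properL G L α hα hbL hb2
      have hx' : unfrozenAt G L α' x := frozen_step G L hL α hα h hx hbne hb2
      obtain ⟨k, f, hk, hf0, hsteps, hw⟩ := ih hP' hdxw α' hα' hx'
      have hvw : v ≠ w := by
        intro he
        have : w ∈ P'.support := SimpleGraph.Walk.end_mem_support P'
        have hvn : v ∉ P'.support := by
          have := hP.support_nodup
          simp only [SimpleGraph.Walk.support_cons, List.nodup_cons] at this
          exact this.1
        exact hvn (he ▸ this)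
      refine ⟨k + 1, fun i => if i = 0 then α else f (i - 1), by omega, by simp, ?_, ?_⟩
      · intro i hi
        match i with
        | 0 =>
          refine ⟨v, by simp [SimpleGraph.Walk.support_cons], hvw, hα, ?_, ?_, ?_⟩
          · simpa [hf0] using hα'
          · simp [hf0, hα'def]
            exact fun hh => hbne hh.symm
          · intro u hu
            simp [hf0, hα'def, Function.update_of_ne hu]
        | (j + 1) =>
          obtain ⟨y, hy, hyw, hst⟩ := hsteps j (by omega)
          refine ⟨y, by simp [SimpleGraph.Walk.support_cons, hy], hyw, ?_⟩
          simpa using hst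
      · simpa using hw

end Aux

theorem stmt4 {V : Type*} [Fintype V] (G : SimpleGraph V) (hG : G.Connected)
    (L : V → Finset ℕ)
    (hL : ∀ u, (G.neighborSet u).ncard + 1 ≤ (L u).card)
    (α : V → ℕ) (hα : properL G L α) (v w : V)
    (P : G.Walk v w) (hP : P.IsPath) (hlen : P.length = G.dist v w)
    (hv : unfrozenAt G L α v) :
    ∃ (k : ℕ) (f : ℕ → V → ℕ), k ≤ G.dist v w ∧ f 0 = α ∧
      (∀ i < k, ∃ x ∈ P.support, x ≠ w ∧ recolStepAt G L (f i) (f (i + 1)) x) ∧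
      unfrozenAt G L (f k) w := by
  classical
  exact aux_main G L hG hL P hP hlen α hα hv
end

section
/- Let G be a connected graph and L a list-assignment with |L(v)| ≥ deg(v)+1 for all vertices v and |L(w)| ≥ deg(w)+2 for at least one vertex w. Then the reconfiguration graph C(G,L) of proper L-colourings (with edges joining colourings differing by a single-vertex recolouring) is connected. -/
/-- A single-vertex recolouring step between proper `L`-colourings:
they differ at exactly one vertex. -/
def recolStep {V : Type*} (G : SimpleGraph V) (L : V → Finset ℕ) (c c' : V → ℕ) : Prop :=
  properL G L c ∧ properL G L c' ∧ ∃ x, c x ≠ c' x ∧ ∀ u, u ≠ x → c u = c' u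

open Function Relation

abbrev SimpleGraph.deleteVertex {V : Type*} (G : SimpleGraph V) (w : V) :
    SimpleGraph {v // v ≠ w} :=
  G.comap Subtype.val

section

variable {V : Type*} {G : SimpleGraph V} {L : V → Finset ℕ}

namespace properL

theorem comap {W : Type*} {c : V → ℕ} (hc : properL G L c) (f : W → V) :
    properL (G.comap f) (L ∘ f) (c ∘ f) :=
  ⟨fun x => hc.1 (f x), fun _ _ h => hc.2 h⟩

theorem update [DecidableEq V] {c : V → ℕ} (hc : properL G L c) {x : V} {a : ℕ}
    (ha : a ∈ L x) (hnb : ∀ u, G.Adj x u → c u ≠ a) : properL G L (Function.update c x a) := by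
  refine ⟨fun v => ?_, fun u v huv => ?_⟩
  · rcases eq_or_ne v x with rfl | hv
    · simpa using ha
    · simpa [hv] using hc.1 v
  · simp only [Function.update_apply]
    split_ifs with hu hv hv
    · exact absurd (hu ▸ hv ▸ huv) (G.irrefl)
    · subst hu
      exact (hnb v huv).symm
    · subst hv
      exact hnb u huv.symm
    · exact hc.2 huv

theorem recolStep_update [DecidableEq V] {c : V → ℕ} (hc : properL G L c) {x : V} {a : ℕ}
    (ha : a ∈ L x) (hnb : ∀ u, G.Adj x u → c u ≠ a) (hne : c x ≠ a) :
    recolStep G L c (Function.update c x a) :=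
  ⟨hc, hc.update ha hnb, x, by simpa using hne, fun _ hu => (update_of_ne hu _ _).symm⟩

theorem of_reflTransGen {c d : V → ℕ} (hc : properL G L c)
    (h : ReflTransGen (recolStep G L) c d) : properL G L d := by
  rcases h.cases_tail with rfl | ⟨_, _, hstep⟩
  exacts [hc, hstep.2.1]

end properL

theorem reflTransGen_recolStep_of_eq_of_ne {c d : V → ℕ} (hc : properL G L c)
    (hd : properL G L d) (w : V) (h : ∀ u, u ≠ w → c u = d u) :
    ReflTransGen (recolStep G L) c d := by
  by_cases hw : c w = d w
  · obtain rfl : c = d := funext fun u => by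
      rcases eq_or_ne u w with rfl | hu
      exacts [hw, h u hu]
    exact .refl
  · exact .single ⟨hc, hd, w, hw, h⟩

theorem exists_reflTransGen_recolStep_ne [DecidableEq V] [Finite V] {c : V → ℕ}
    (hc : properL G L c) {w : V} (hw : (G.neighborSet w).ncard + 2 ≤ (L w).card) (a : ℕ) :
    ∃ c₁, ReflTransGen (recolStep G L) c c₁ ∧ (∀ u, u ≠ w → c₁ u = c u) ∧ c₁ w ≠ a := by
  by_cases hcw : c w = a
  · have hlt : (insert a (c '' G.neighborSet w)).ncard < (↑(L w) : Set ℕ).ncard := by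
      rw [Set.ncard_coe_finset]
      calc (insert a (c '' G.neighborSet w)).ncard
          ≤ (c '' G.neighborSet w).ncard + 1 := Set.ncard_insert_le _ _
        _ ≤ (G.neighborSet w).ncard + 1 := by grw [Set.ncard_image_le (Set.toFinite _)]
        _ < (L w).card := by omega
    obtain ⟨b, hbL, hb⟩ := Set.exists_mem_notMem_of_ncard_lt_ncard hlt
    rw [Set.mem_insert_iff, not_or] at hb
    refine ⟨update c w b, .single (hc.recolStep_update hbL ?_ ?_), ?_, by simpa using hb.1⟩
    · exact fun u hu hcu => hb.2 ⟨u, hu, hcu⟩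
    · exact hcw ▸ Ne.symm hb.1
    · exact fun u hu => update_of_ne hu _ _
  · exact ⟨c, .refl, fun _ _ => rfl, hcw⟩

section deleteVertex

variable {w : V}

theorem ncard_neighborSet_deleteVertex (x : {v // v ≠ w}) :
    ((G.deleteVertex w).neighborSet x).ncard = (G.neighborSet x \ {w}).ncard := by
  rw [← Set.ncard_image_of_injective _ Subtype.val_injective]
  congr 1
  ext u
  constructor
  · rintro ⟨u, hu, rfl⟩
    exact ⟨hu, u.2⟩
  · rintro ⟨hu, huw⟩
    exact ⟨⟨u, huw⟩, hu, rfl⟩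

theorem ncard_neighborSet_deleteVertex_le [Finite V] (x : {v // v ≠ w}) :
    ((G.deleteVertex w).neighborSet x).ncard ≤ (G.neighborSet x).ncard := by
  rw [ncard_neighborSet_deleteVertex]
  exact Set.ncard_le_ncard Set.sdiff_subset

theorem ncard_neighborSet_deleteVertex_lt [Finite V] {x : {v // v ≠ w}} (hx : G.Adj x w) :
    ((G.deleteVertex w).neighborSet x).ncard < (G.neighborSet x).ncard := by
  rw [ncard_neighborSet_deleteVertex]
  exact Set.ncard_sdiff_singleton_lt_of_mem hx

/-- Following a walk from `b` towards a vertex with two spare colours, either the walk avoids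
`w`, or the vertex just before `w` gains a spare colour in `G - w`. -/
theorem exists_reachable_deleteVertex_slack [Finite V]
    (h1 : ∀ v, (G.neighborSet v).ncard + 1 ≤ (L v).card) {b z : V} (p : G.Walk b z)
    (hz : (G.neighborSet z).ncard + 2 ≤ (L z).card) (hb : b ≠ w) :
    ∃ z' : {v // v ≠ w}, (G.deleteVertex w).Reachable ⟨b, hb⟩ z' ∧
      ((G.deleteVertex w).neighborSet z').ncard + 2 ≤ (L z').card := by
  induction p with
  | nil =>
    exact ⟨⟨_, hb⟩, .refl _,
      (Nat.add_le_add_right (ncard_neighborSet_deleteVertex_le _) 2).trans hz⟩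
  | @cons b c z hbc p ih =>
    by_cases hcw : c = w
    · have hlt : ((G.deleteVertex w).neighborSet ⟨b, hb⟩).ncard < (G.neighborSet b).ncard :=
        ncard_neighborSet_deleteVertex_lt (hcw ▸ hbc)
      exact ⟨⟨b, hb⟩, .refl _, by linarith [h1 b]⟩
    · obtain ⟨z', hreach, hz'⟩ := ih hz hcw
      exact ⟨z', (show (G.deleteVertex w).Adj ⟨b, hb⟩ ⟨c, hcw⟩ from hbc).reachable.trans hreach,
        hz'⟩

variable [Finite V]

theorem exists_reflTransGen_of_recolStep_deleteVertex
    (hw : (G.neighborSet w).ncard + 2 ≤ (L w).card) {c : V → ℕ} (hc : properL G L c)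
    {m' : {v // v ≠ w} → ℕ} (hstep : recolStep (G.deleteVertex w) (L ∘ Subtype.val)
      (c ∘ Subtype.val) m') :
    ∃ m, m ∘ Subtype.val = m' ∧ ReflTransGen (recolStep G L) c m := by
  classical
  obtain ⟨-, hm', x, hne, heq⟩ := hstep
  obtain ⟨c₁, hcc₁, hc₁, hc₁w⟩ := exists_reflTransGen_recolStep_ne hc hw (m' x)
  have hc₁x : ∀ y : {v // v ≠ w}, c₁ y = c y := fun y => hc₁ y y.2
  refine ⟨update c₁ x (m' x), funext fun y => ?_, hcc₁.tail ?_⟩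
  · rcases eq_or_ne y x with rfl | hyx
    · simp
    · simpa [Subtype.val_injective.ne hyx, hc₁x] using heq y hyx
  refine (hc.of_reflTransGen hcc₁).recolStep_update (hm'.1 x) (fun u hxu => ?_) (by simpa [hc₁x])
  rcases eq_or_ne u w with rfl | huw
  · exact hc₁w
  · have hux : (⟨u, huw⟩ : {v // v ≠ w}) ≠ x := fun h =>
      G.ne_of_adj hxu (congrArg Subtype.val h).symm
    have hadj : (G.deleteVertex w).Adj x ⟨u, huw⟩ := hxu
    rw [hc₁ u huw]
    exact fun h => hm'.2 hadj ((heq _ hux).symm.trans h).symm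

theorem exists_reflTransGen_of_reflTransGen_deleteVertex
    (hw : (G.neighborSet w).ncard + 2 ≤ (L w).card) {c : V → ℕ} (hc : properL G L c)
    {d' : {v // v ≠ w} → ℕ} (h : ReflTransGen (recolStep (G.deleteVertex w) (L ∘ Subtype.val))
      (c ∘ Subtype.val) d') :
    ∃ d, d ∘ Subtype.val = d' ∧ ReflTransGen (recolStep G L) c d := by
  generalize hc' : c ∘ Subtype.val = c' at h
  induction h using ReflTransGen.head_induction_on generalizing c with
  | refl => exact ⟨c, hc', .refl⟩
  | head hstep _ ih =>
    subst hc'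
    obtain ⟨m, hm, hcm⟩ := exists_reflTransGen_of_recolStep_deleteVertex hw hc hstep
    obtain ⟨d, hd, hmd⟩ := ih (hc.of_reflTransGen hcm) hm
    exact ⟨d, hd, hcm.trans hmd⟩

end deleteVertex

theorem reflTransGen_recolStep_of_forall_reachable_slack [Finite V]
    (h1 : ∀ v, (G.neighborSet v).ncard + 1 ≤ (L v).card)
    (h2 : ∀ v, ∃ z, G.Reachable v z ∧ (G.neighborSet z).ncard + 2 ≤ (L z).card)
    {α β : V → ℕ} (hα : properL G L α) (hβ : properL G L β) :
    ReflTransGen (recolStep G L) α β := by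
  classical
  induction hn : Nat.card V generalizing V with
  | zero =>
    have := Finite.card_eq_zero_iff.mp hn
    rw [Subsingleton.elim α β]
  | succ n ih =>
    obtain ⟨v⟩ : Nonempty V := Finite.card_pos_iff.mp (by omega)
    obtain ⟨w, -, hw⟩ := h2 v
    have hcard : Nat.card {v // v ≠ w} = n := by
      rw [← Nat.add_right_cancel_iff, ← Finite.card_option, Nat.card_congr (.optionSubtypeNe w), hn]
    have h1' (x : {v // v ≠ w}) : ((G.deleteVertex w).neighborSet x).ncard + 1 ≤ (L x).card :=
      (Nat.add_le_add_right (ncard_neighborSet_deleteVertex_le x) 1).trans (h1 x)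
    have h2' (x : {v // v ≠ w}) : ∃ z, (G.deleteVertex w).Reachable x z ∧
        ((G.deleteVertex w).neighborSet z).ncard + 2 ≤ (L z).card := by
      obtain ⟨z, ⟨p⟩, hz⟩ := h2 x
      exact exists_reachable_deleteVertex_slack h1 p hz x.2
    obtain ⟨d, hd, hαd⟩ := exists_reflTransGen_of_reflTransGen_deleteVertex hw hα
      (ih h1' h2' (hα.comap _) (hβ.comap _) hcard)
    refine hαd.trans (reflTransGen_recolStep_of_eq_of_ne (hα.of_reflTransGen hαd) hβ w ?_)
    exact fun u hu => congrFun hd ⟨u, hu⟩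

end

theorem stmt5 {V : Type*} [Fintype V] (G : SimpleGraph V) (hG : G.Connected)
    (L : V → Finset ℕ)
    (h1 : ∀ v, (G.neighborSet v).ncard + 1 ≤ (L v).card)
    (h2 : ∃ w, (G.neighborSet w).ncard + 2 ≤ (L w).card)
    (α β : V → ℕ) (hα : properL G L α) (hβ : properL G L β) :
    Relation.ReflTransGen (recolStep G L) α β := by
  obtain ⟨w, hw⟩ := h2
  exact reflTransGen_recolStep_of_forall_reachable_slack h1
    (fun v => ⟨w, hG.preconnected v w, hw⟩) hα hβ
end

section
/- Let α and α' be proper 3-colourings of the cycle C_n that differ at exactly one vertex. Then the winding numbers satisfy f(α) = f(α'). -/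
/-- `c` is a proper 3-colouring of the cycle `C_n` (vertices indexed `0,…,n-1`,
vertex `i` adjacent to `(i+1) % n`), with colours in `{1,2,3}`. -/
def proper3Cycle (n : ℕ) (c : ℕ → ℕ) : Prop :=
  (∀ i < n, c i ∈ ({1, 2, 3} : Finset ℕ)) ∧ ∀ i < n, c i ≠ c ((i + 1) % n)

/-- Three times the winding number of a proper 3-colouring of `C_n`. -/
def windSum (n : ℕ) (c : ℕ → ℕ) : ℤ :=
  ∑ i ∈ Finset.range n,
    (if (c i, c ((i + 1) % n)) ∈ ({(1, 2), (2, 3), (3, 1)} : Finset (ℕ × ℕ))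
      then (1 : ℤ) else -1)

lemma pair_lemma (a b b' c : ℕ) (ha : a ∈ ({1,2,3} : Finset ℕ))
    (hb : b ∈ ({1,2,3} : Finset ℕ)) (hb' : b' ∈ ({1,2,3} : Finset ℕ))
    (hc : c ∈ ({1,2,3} : Finset ℕ))
    (hab : a ≠ b) (hbc : b ≠ c) (hab' : a ≠ b') (hb'c : b' ≠ c) :
    ((if (a, b) ∈ ({(1, 2), (2, 3), (3, 1)} : Finset (ℕ × ℕ)) then (1 : ℤ) else -1) +
      (if (b, c) ∈ ({(1, 2), (2, 3), (3, 1)} : Finset (ℕ × ℕ)) then (1 : ℤ) else -1)) =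
    ((if (a, b') ∈ ({(1, 2), (2, 3), (3, 1)} : Finset (ℕ × ℕ)) then (1 : ℤ) else -1) +
      (if (b', c) ∈ ({(1, 2), (2, 3), (3, 1)} : Finset (ℕ × ℕ)) then (1 : ℤ) else -1)) := by
  fin_cases ha <;> fin_cases hb <;> fin_cases hb' <;> fin_cases hc <;>
    revert hab hbc hab' hb'c <;> decide

theorem stmt8 (n : ℕ) (hn : 3 ≤ n) (α α' : ℕ → ℕ)
    (hα : proper3Cycle n α) (hα' : proper3Cycle n α')
    (j : ℕ) (hj : j < n) (hne : α j ≠ α' j)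
    (hagree : ∀ i, i ≠ j → α i = α' i) :
    windSum n α = windSum n α' := by
  set S : Finset (ℕ × ℕ) := ({(1, 2), (2, 3), (3, 1)} : Finset (ℕ × ℕ)) with hS
  set t : ℕ → ℤ := fun i => if (α i, α ((i + 1) % n)) ∈ S then (1 : ℤ) else -1 with ht
  set t' : ℕ → ℤ := fun i => if (α' i, α' ((i + 1) % n)) ∈ S then (1 : ℤ) else -1 with ht'
  have hn0 : 0 < n := by omega
  set p := (j + (n - 1)) % n with hp
  have hpn : p < n := Nat.mod_lt _ hn0
  have hp1 : (p + 1) % n = j := by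
    rw [hp, Nat.mod_add_mod]
    have : j + (n - 1) + 1 = j + n := by omega
    rw [this, Nat.add_mod_right, Nat.mod_eq_of_lt hj]
  have hpj : p ≠ j := by
    intro h
    rw [h] at hp1
    rcases Nat.lt_or_ge (j + 1) n with h1 | h1
    · rw [Nat.mod_eq_of_lt h1] at hp1; omega
    · have : j + 1 = n := by omega
      rw [this, Nat.mod_self] at hp1; omega
  have hnext : (j + 1) % n ≠ j := by
    intro h
    rcases Nat.lt_or_ge (j + 1) n with h1 | h1
    · rw [Nat.mod_eq_of_lt h1] at h; omega
    · have : j + 1 = n := by omega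
      rw [this, Nat.mod_self] at h; omega
  -- for i < n, i ≠ p, (i+1) % n ≠ j
  have hinj : ∀ i, i < n → i ≠ p → (i + 1) % n ≠ j := by
    intro i hi hip h
    rcases Nat.lt_or_ge (i + 1) n with h1 | h1
    · rw [Nat.mod_eq_of_lt h1] at h
      apply hip
      rw [hp, ← h]
      have : i + 1 + (n - 1) = i + n := by omega
      rw [this, Nat.add_mod_right, Nat.mod_eq_of_lt hi]
    · have hin : i + 1 = n := by omega
      rw [hin, Nat.mod_self] at h
      apply hip
      rw [hp, ← h]
      simp
      omega
  have heq : ∀ i ∈ Finset.range n, i ∉ ({p, j} : Finset ℕ) → t i - t' i = 0 := by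
    intro i hi hip
    simp only [Finset.mem_insert, Finset.mem_singleton, not_or] at hip
    simp only [Finset.mem_range] at hi
    have h1 : α i = α' i := hagree i hip.2
    have h2 : α ((i + 1) % n) = α' ((i + 1) % n) := hagree _ (hinj i hi hip.1)
    simp [ht, ht', h1, h2]
  have hsub : ({p, j} : Finset ℕ) ⊆ Finset.range n := by
    intro x hx
    simp only [Finset.mem_insert, Finset.mem_singleton] at hx
    rcases hx with h | h <;> simp [h, hpn, hj]
  have hsplit : windSum n α - windSum n α' = (t p - t' p) + (t j - t' j) := by
    have : windSum n α - windSum n α' = ∑ i ∈ Finset.range n, (t i - t' i) := by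
      rw [windSum, windSum, ← Finset.sum_sub_distrib]
    rw [this, ← Finset.sum_subset hsub (fun x hx hx' => heq x hx hx'),
      Finset.sum_pair hpj]
  have hprevα := hagree p hpj
  have hnextα := hagree _ hnext
  have h1 : α p ≠ α j := by have := hα.2 p hpn; rwa [hp1] at this
  have h2 : α j ≠ α ((j + 1) % n) := hα.2 j hj
  have h1' : α p ≠ α' j := by
    have := hα'.2 p hpn; rwa [hp1, ← hprevα] at this
  have h2' : α' j ≠ α ((j + 1) % n) := by
    have := hα'.2 j hj; rwa [← hnextα] at this
  have hkey : t p + t j = t' p + t' j := by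
    have := pair_lemma (α p) (α j) (α' j) (α ((j + 1) % n))
      (hα.1 p hpn) (hα.1 j hj) (hα'.1 j hj) (hα.1 _ (Nat.mod_lt _ hn0))
      h1 h2 h1' h2'
    simp only [ht, ht', hp1, ← hprevα, ← hnextα] at *
    convert this using 2
  omega
end

section
/- For every n ≥ 8, there exist two proper 3-colourings α and β of the cycle C_n whose winding numbers differ: f(α) ≠ f(β). Consequently, the reconfiguration graph of proper 3-colourings of C_n (with edges given by single-vertex recolourings) is disconnected. -/
/-- A single-vertex recolouring step between proper 3-colourings of `C_n`. -/
def cycleStep (n : ℕ) (c c' : ℕ → ℕ) : Prop :=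
  proper3Cycle n c ∧ proper3Cycle n c' ∧
    ∃ j < n, c j ≠ c' j ∧ ∀ i, i ≠ j → c i = c' i

/- ### Auxiliary machinery -/

def wterm (n : ℕ) (c : ℕ → ℕ) (i : ℕ) : ℤ :=
  if (c i, c ((i + 1) % n)) ∈ ({(1, 2), (2, 3), (3, 1)} : Finset (ℕ × ℕ))
    then (1 : ℤ) else -1

lemma windSum_eq (n : ℕ) (c : ℕ → ℕ) :
    windSum n c = ∑ i ∈ Finset.range n, wterm n c i := rfl

lemma succ_mod (n i : ℕ) (hn : 1 ≤ n) (hi : i < n) :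
    (i + 1) % n = if i = n - 1 then 0 else i + 1 := by
  split
  · rename_i h
    rw [h, Nat.sub_add_cancel hn, Nat.mod_self]
  · exact Nat.mod_eq_of_lt (by omega)

lemma pair_zero (a x : ℕ) (ha : a ∈ ({1, 2, 3} : Finset ℕ))
    (hx : x ∈ ({1, 2, 3} : Finset ℕ)) (hne : a ≠ x) :
    (if (a, x) ∈ ({(1, 2), (2, 3), (3, 1)} : Finset (ℕ × ℕ)) then (1 : ℤ) else -1) +
      (if (x, a) ∈ ({(1, 2), (2, 3), (3, 1)} : Finset (ℕ × ℕ)) then (1 : ℤ) else -1) = 0 := by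
  fin_cases ha <;> fin_cases hx <;> revert hne <;> decide

lemma third_unique (a b x y : ℕ)
    (ha : a ∈ ({1, 2, 3} : Finset ℕ)) (hb : b ∈ ({1, 2, 3} : Finset ℕ))
    (hx : x ∈ ({1, 2, 3} : Finset ℕ)) (hy : y ∈ ({1, 2, 3} : Finset ℕ))
    (hab : a ≠ b) (hxa : x ≠ a) (hxb : x ≠ b) (hya : y ≠ a) (hyb : y ≠ b) :
    x = y := by
  simp only [Finset.mem_insert, Finset.mem_singleton] at ha hb hx hy
  omega

lemma cycleStep_windSum {n : ℕ} (hn : 2 ≤ n) {c c' : ℕ → ℕ}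
    (h : cycleStep n c c') : windSum n c = windSum n c' := by
  obtain ⟨⟨hcol, hadj⟩, ⟨hcol', hadj'⟩, j, hj, hne, heq⟩ := h
  set p := if j = 0 then n - 1 else j - 1 with hp
  have hpn : p < n := by rw [hp]; split <;> omega
  have hpj : p ≠ j := by rw [hp]; split <;> omega
  have hp1 : (p + 1) % n = j := by
    rw [hp]; split
    · rename_i h0
      rw [Nat.sub_add_cancel (by omega), Nat.mod_self, h0]
    · rename_i h0
      rw [Nat.sub_add_cancel (by omega), Nat.mod_eq_of_lt hj]
  set q := (j + 1) % n with hq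
  have hqn : q < n := Nat.mod_lt _ (by omega)
  have hqj : q ≠ j := by
    rw [hq, succ_mod n j (by omega) hj]; split <;> omega
  have hiff : ∀ i, i < n → i ≠ p → (i + 1) % n ≠ j := by
    intro i hi hip
    rw [succ_mod n i (by omega) hi]
    split
    · rename_i hin
      intro h0
      exact hip (by rw [hp, if_pos h0.symm, hin])
    · intro h0
      exact hip (by rw [hp, if_neg (by omega)]; omega)
  have ha : c p = c' p := heq p hpj
  have hb : c q = c' q := heq q hqj
  have hadjp : c p ≠ c j := by have := hadj p hpn; rwa [hp1] at this
  have hadjp' : c' p ≠ c' j := by have := hadj' p hpn; rwa [hp1] at this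
  have hadjj : c j ≠ c q := hadj j hj
  have hadjj' : c' j ≠ c' q := hadj' j hj
  have hab : c p = c q := by
    by_contra habne
    exact hne (third_unique (c p) (c q) (c j) (c' j)
      (hcol p hpn) (hcol q hqn) (hcol j hj) (hcol' j hj)
      habne (Ne.symm hadjp) hadjj (by rw [ha]; exact Ne.symm hadjp') (by rw [hb]; exact hadjj'))
  have key : wterm n c p + wterm n c j = 0 := by
    unfold wterm
    rw [hp1, ← hq, ← hab]
    exact pair_zero (c p) (c j) (hcol p hpn) (hcol j hj) hadjp
  have key' : wterm n c' p + wterm n c' j = 0 := by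
    unfold wterm
    rw [hp1, ← hq]
    have hab' : c' p = c' q := by rw [← ha, ← hb, hab]
    rw [← hab']
    exact pair_zero (c' p) (c' j) (hcol' p hpn) (hcol' j hj) hadjp'
  have hjm : j ∈ Finset.range n := Finset.mem_range.mpr hj
  have hpm : p ∈ (Finset.range n).erase j :=
    Finset.mem_erase.mpr ⟨hpj, Finset.mem_range.mpr hpn⟩
  have hrest : ∑ i ∈ ((Finset.range n).erase j).erase p, wterm n c i =
      ∑ i ∈ ((Finset.range n).erase j).erase p, wterm n c' i := by
    apply Finset.sum_congr rfl
    intro i hi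
    simp only [Finset.mem_erase, Finset.mem_range] at hi
    obtain ⟨hip, hij, hin⟩ := hi
    unfold wterm
    rw [heq i hij, heq _ (hiff i hin hip)]
  rw [windSum_eq, windSum_eq,
    ← Finset.sum_erase_add (Finset.range n) _ hjm,
    ← Finset.sum_erase_add _ _ hpm,
    ← Finset.sum_erase_add (Finset.range n) (wterm n c') hjm,
    ← Finset.sum_erase_add _ (wterm n c') hpm]
  linarith [key, key', hrest]

/- ### The two colourings -/

def myα (n : ℕ) : ℕ → ℕ := fun i => if i = n - 1 ∧ n % 2 = 1 then 3 else i % 2 + 1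

def myβ (n : ℕ) : ℕ → ℕ := fun i => if i = n - 1 ∧ n % 3 = 1 then 2 else i % 3 + 1

lemma proper_alpha (n : ℕ) (hn : 8 ≤ n) : proper3Cycle n (myα n) := by
  constructor
  · intro i hi
    simp only [Finset.mem_insert, Finset.mem_singleton, myα]
    split_ifs <;> omega
  · intro i hi
    rw [succ_mod n i (by omega) hi]
    simp only [myα]
    split_ifs <;> omega

lemma proper_beta (n : ℕ) (hn : 8 ≤ n) : proper3Cycle n (myβ n) := by
  constructor
  · intro i hi
    simp only [Finset.mem_insert, Finset.mem_singleton, myβ]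
    split_ifs <;> omega
  · intro i hi
    rw [succ_mod n i (by omega) hi]
    simp only [myβ]
    split_ifs <;> omega

lemma alt_sum (m : ℕ) :
    ∑ i ∈ Finset.range m, (if i % 2 = 0 then (1 : ℤ) else -1)
      = if m % 2 = 0 then 0 else 1 := by
  induction m with
  | zero => simp
  | succ k ih =>
    rw [Finset.sum_range_succ, ih]
    rcases Nat.mod_two_eq_zero_or_one k with h | h
    · rw [if_pos h, if_pos h, if_neg (by omega)]; ring
    · rw [if_neg (by omega), if_neg (by omega), if_pos (by omega)]; ring

lemma windAlpha (n : ℕ) (hn : 8 ≤ n) :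
    windSum n (myα n) = if n % 2 = 0 then 0 else 3 := by
  rcases Nat.mod_two_eq_zero_or_one n with hpar | hpar
  · -- even case: n = m + 1, m odd
    obtain ⟨m, rfl⟩ : ∃ m, n = m + 1 := ⟨n - 1, by omega⟩
    rw [windSum_eq, Finset.sum_range_succ, if_pos hpar]
    have h1 : ∀ i ∈ Finset.range m, wterm (m + 1) (myα (m + 1)) i
        = (if i % 2 = 0 then (1 : ℤ) else -1) := by
      intro i hi
      rw [Finset.mem_range] at hi
      unfold wterm myα
      rw [Nat.mod_eq_of_lt (by omega : i + 1 < m + 1),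
        if_neg (by omega : ¬(i = m + 1 - 1 ∧ (m + 1) % 2 = 1)),
        if_neg (by omega : ¬(i + 1 = m + 1 - 1 ∧ (m + 1) % 2 = 1))]
      rcases Nat.mod_two_eq_zero_or_one i with h | h
      · rw [h, (by omega : (i + 1) % 2 = 1)]; decide
      · rw [h, (by omega : (i + 1) % 2 = 0)]; decide
    rw [Finset.sum_congr rfl h1, alt_sum, if_neg (by omega : ¬ m % 2 = 0)]
    have h2 : wterm (m + 1) (myα (m + 1)) m = -1 := by
      unfold wterm myα
      rw [Nat.mod_self,
        if_neg (by omega : ¬(m = m + 1 - 1 ∧ (m + 1) % 2 = 1)),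
        if_neg (by omega : ¬(0 = m + 1 - 1 ∧ (m + 1) % 2 = 1)),
        (by omega : m % 2 = 1)]
      decide
    rw [h2]; ring
  · -- odd case: n = m + 2, m odd
    obtain ⟨m, rfl⟩ : ∃ m, n = m + 2 := ⟨n - 2, by omega⟩
    rw [windSum_eq, Finset.sum_range_succ, Finset.sum_range_succ, if_neg (by omega)]
    have h1 : ∀ i ∈ Finset.range m, wterm (m + 2) (myα (m + 2)) i
        = (if i % 2 = 0 then (1 : ℤ) else -1) := by
      intro i hi
      rw [Finset.mem_range] at hi
      unfold wterm myα
      rw [Nat.mod_eq_of_lt (by omega : i + 1 < m + 2),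
        if_neg (by omega : ¬(i = m + 2 - 1 ∧ (m + 2) % 2 = 1)),
        if_neg (by omega : ¬(i + 1 = m + 2 - 1 ∧ (m + 2) % 2 = 1))]
      rcases Nat.mod_two_eq_zero_or_one i with h | h
      · rw [h, (by omega : (i + 1) % 2 = 1)]; decide
      · rw [h, (by omega : (i + 1) % 2 = 0)]; decide
    rw [Finset.sum_congr rfl h1, alt_sum, if_neg (by omega : ¬ m % 2 = 0)]
    have h2 : wterm (m + 2) (myα (m + 2)) m = 1 := by
      unfold wterm myα
      rw [Nat.mod_eq_of_lt (by omega : m + 1 < m + 2),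
        if_neg (by omega : ¬(m = m + 2 - 1 ∧ (m + 2) % 2 = 1)),
        if_pos (⟨by omega, hpar⟩ : m + 1 = m + 2 - 1 ∧ (m + 2) % 2 = 1),
        (by omega : m % 2 = 1)]
      decide
    have h3 : wterm (m + 2) (myα (m + 2)) (m + 1) = 1 := by
      unfold wterm myα
      rw [Nat.mod_self,
        if_pos (⟨by omega, hpar⟩ : m + 1 = m + 2 - 1 ∧ (m + 2) % 2 = 1),
        if_neg (by omega : ¬(0 = m + 2 - 1 ∧ (m + 2) % 2 = 1))]
      decide
    rw [h2, h3]; ring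

lemma beta_prefix (n m : ℕ) (hm : m + 1 ≤ n) (hn : 2 ≤ n)
    (hcond : n % 3 ≠ 1 ∨ m + 2 ≤ n) :
    ∀ i ∈ Finset.range m, wterm n (myβ n) i = 1 := by
  intro i hi
  rw [Finset.mem_range] at hi
  unfold wterm myβ
  rw [Nat.mod_eq_of_lt (by omega : i + 1 < n),
    if_neg (by omega : ¬(i = n - 1 ∧ n % 3 = 1)),
    if_neg (by omega : ¬(i + 1 = n - 1 ∧ n % 3 = 1))]
  have h3 : i % 3 = 0 ∧ (i + 1) % 3 = 1 ∨ i % 3 = 1 ∧ (i + 1) % 3 = 2 ∨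
      i % 3 = 2 ∧ (i + 1) % 3 = 0 := by omega
  rcases h3 with ⟨h, h'⟩ | ⟨h, h'⟩ | ⟨h, h'⟩ <;> rw [h, h'] <;> decide

lemma windBeta (n : ℕ) (hn : 8 ≤ n) :
    windSum n (myβ n) = (n : ℤ) - (if n % 3 = 0 then 0 else if n % 3 = 1 then 4 else 2) := by
  rcases (by omega : n % 3 = 0 ∨ n % 3 = 1 ∨ n % 3 = 2) with h3 | h3 | h3
  · obtain ⟨m, rfl⟩ : ∃ m, n = m + 1 := ⟨n - 1, by omega⟩
    rw [windSum_eq, Finset.sum_range_succ, if_pos h3]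
    rw [Finset.sum_congr rfl (beta_prefix (m + 1) m le_rfl (by omega) (Or.inl (by omega))),
      Finset.sum_const, Finset.card_range]
    have h2 : wterm (m + 1) (myβ (m + 1)) m = 1 := by
      unfold wterm myβ
      rw [Nat.mod_self,
        if_neg (by omega : ¬(m = m + 1 - 1 ∧ (m + 1) % 3 = 1)),
        if_neg (by omega : ¬(0 = m + 1 - 1 ∧ (m + 1) % 3 = 1)),
        (by omega : m % 3 = 2)]
      decide
    rw [h2]
    push_cast
    ring
  · obtain ⟨m, rfl⟩ : ∃ m, n = m + 2 := ⟨n - 2, by omega⟩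
    rw [windSum_eq, Finset.sum_range_succ, Finset.sum_range_succ,
      if_neg (by omega), if_pos h3]
    rw [Finset.sum_congr rfl (beta_prefix (m + 2) m (by omega) (by omega) (Or.inr (by omega))),
      Finset.sum_const, Finset.card_range]
    have h2 : wterm (m + 2) (myβ (m + 2)) m = -1 := by
      unfold wterm myβ
      rw [Nat.mod_eq_of_lt (by omega : m + 1 < m + 2),
        if_neg (by omega : ¬(m = m + 2 - 1 ∧ (m + 2) % 3 = 1)),
        if_pos (⟨by omega, h3⟩ : m + 1 = m + 2 - 1 ∧ (m + 2) % 3 = 1),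
        (by omega : m % 3 = 2)]
      decide
    have h4 : wterm (m + 2) (myβ (m + 2)) (m + 1) = -1 := by
      unfold wterm myβ
      rw [Nat.mod_self,
        if_pos (⟨by omega, h3⟩ : m + 1 = m + 2 - 1 ∧ (m + 2) % 3 = 1),
        if_neg (by omega : ¬(0 = m + 2 - 1 ∧ (m + 2) % 3 = 1))]
      decide
    rw [h2, h4]
    push_cast
    ring
  · obtain ⟨m, rfl⟩ : ∃ m, n = m + 1 := ⟨n - 1, by omega⟩
    rw [windSum_eq, Finset.sum_range_succ, if_neg (by omega), if_neg (by omega)]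
    rw [Finset.sum_congr rfl (beta_prefix (m + 1) m le_rfl (by omega) (Or.inl (by omega))),
      Finset.sum_const, Finset.card_range]
    have h2 : wterm (m + 1) (myβ (m + 1)) m = -1 := by
      unfold wterm myβ
      rw [Nat.mod_self,
        if_neg (by omega : ¬(m = m + 1 - 1 ∧ (m + 1) % 3 = 1)),
        if_neg (by omega : ¬(0 = m + 1 - 1 ∧ (m + 1) % 3 = 1)),
        (by omega : m % 3 = 1)]
      decide
    rw [h2]
    push_cast
    ring

lemma rtg_windSum {n : ℕ} (hn : 2 ≤ n) {x y : ℕ → ℕ}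
    (h : Relation.ReflTransGen (cycleStep n) x y) : windSum n x = windSum n y := by
  induction h with
  | refl => rfl
  | tail _ hstep ih => exact ih.trans (cycleStep_windSum hn hstep)

theorem stmt9 (n : ℕ) (hn : 8 ≤ n) :
    ∃ α β : ℕ → ℕ, proper3Cycle n α ∧ proper3Cycle n β ∧
      windSum n α ≠ windSum n β ∧
      ¬ Relation.ReflTransGen (cycleStep n) α β := by
  have hwα := windAlpha n hn
  have hwβ := windBeta n hn
  have hne : windSum n (myα n) ≠ windSum n (myβ n) := by
    rw [hwα, hwβ]
    split_ifs <;> omega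
  refine ⟨myα n, myβ n, proper_alpha n hn, proper_beta n hn, hne, ?_⟩
  intro hreach
  exact hne (rtg_windSum (by omega) hreach)
end

section
/- Let G = K_n (n ≥ 2) with a list-assignment L satisfying |L(v)| ≥ n for all v and |⋃_{v} L(v)| > n. Then any two proper L-colourings α, β of K_n can be transformed into each other by a sequence of at most 3n/2 + 2 single-vertex recolourings. -/
namespace Stmt11

variable {V : Type*} [Fintype V] [DecidableEq V]

set_option linter.unusedSectionVars false

/-- The palette (set of used colours) of a colouring. -/
def pal (c : V → ℕ) : Finset ℕ := Finset.univ.image c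

/-- The set of vertices where `c` disagrees with `β`. -/
def Dset (β c : V → ℕ) : Finset V := Finset.univ.filter fun v => c v ≠ β v

/-- A good colouring: from the lists, and injective. -/
def Good (L : V → Finset ℕ) (c : V → ℕ) : Prop :=
  (∀ v, c v ∈ L v) ∧ Function.Injective c

/-- Reachability in exactly `k` recolouring steps. -/
def Reach (L : V → Finset ℕ) (c c' : V → ℕ) (k : ℕ) : Prop :=
  ∃ f : ℕ → V → ℕ, f 0 = c ∧ f k = c' ∧
    ∀ i < k, recolStep (⊤ : SimpleGraph V) L (f i) (f (i + 1))

lemma mem_pal {c : V → ℕ} {q : ℕ} : q ∈ pal c ↔ ∃ u, c u = q := by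
  simp [pal]

lemma self_mem_pal {c : V → ℕ} (u : V) : c u ∈ pal c := mem_pal.mpr ⟨u, rfl⟩

lemma mem_Dset {β c : V → ℕ} {v : V} : v ∈ Dset β c ↔ c v ≠ β v := by
  simp [Dset]

lemma pal_card {c : V → ℕ} (h : Function.Injective c) :
    (pal c).card = Fintype.card V := by
  rw [pal, Finset.card_image_of_injective _ h, Finset.card_univ]

lemma Dset_card_le {β c : V → ℕ} : (Dset β c).card ≤ Fintype.card V := by
  rw [← Finset.card_univ]; exact Finset.card_filter_le _ _

lemma properL_top_iff {L : V → Finset ℕ} {c : V → ℕ} :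
    properL (⊤ : SimpleGraph V) L c ↔ Good L c := by
  constructor
  · rintro ⟨h1, h2⟩
    refine ⟨h1, fun a a' h => ?_⟩
    by_contra hne
    exact h2 (by simpa using hne) h
  · rintro ⟨h1, h2⟩
    exact ⟨h1, fun u w hadj h => (by simpa using hadj : u ≠ w) (h2 h)⟩

lemma notMem_pal_update {c : V → ℕ} {v : V} {b q : ℕ} (h1 : q ≠ b)
    (h2 : ∀ u, u ≠ v → c u ≠ q) : q ∉ pal (Function.update c v b) := by
  rw [mem_pal]
  rintro ⟨u, hu⟩
  by_cases huv : u = v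
  · subst huv; rw [Function.update_self] at hu; exact h1 hu.symm
  · rw [Function.update_of_ne huv] at hu; exact h2 u huv hu

lemma good_update {L : V → Finset ℕ} {c : V → ℕ} {v : V} {b : ℕ}
    (hg : Good L c) (hbL : b ∈ L v) (hbP : b ∉ pal c) :
    Good L (Function.update c v b) := by
  constructor
  · intro u
    by_cases h : u = v
    · subst h; rw [Function.update_self]; exact hbL
    · rw [Function.update_of_ne h]; exact hg.1 u
  · intro a a' h
    by_cases ha : a = v <;> by_cases ha' : a' = v
    · rw [ha, ha']
    · subst ha; rw [Function.update_self, Function.update_of_ne ha'] at h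
      exact absurd (mem_pal.mpr ⟨a', h.symm⟩) hbP
    · subst ha'; rw [Function.update_self, Function.update_of_ne ha] at h
      exact absurd (mem_pal.mpr ⟨a, h⟩) hbP
    · rw [Function.update_of_ne ha, Function.update_of_ne ha'] at h
      exact hg.2 h

lemma recol_update {L : V → Finset ℕ} {c : V → ℕ} {v : V} {b : ℕ}
    (hg : Good L c) (hbL : b ∈ L v) (hbP : b ∉ pal c) :
    recolStep (⊤ : SimpleGraph V) L c (Function.update c v b) := by
  refine ⟨properL_top_iff.mpr hg, properL_top_iff.mpr (good_update hg hbL hbP), v, ?_, ?_⟩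
  · rw [Function.update_self]
    exact fun h => hbP (h ▸ self_mem_pal v)
  · intro u hu; rw [Function.update_of_ne hu]

lemma Dset_update_insert {β c : V → ℕ} {v : V} {b : ℕ} (hb : b ≠ β v) :
    Dset β (Function.update c v b) = insert v (Dset β c) := by
  ext a
  by_cases h : a = v
  · subst h
    simp [mem_Dset, Function.update_self, hb, Finset.mem_insert]
  · simp [mem_Dset, Function.update_of_ne h, Finset.mem_insert, h]

lemma Dset_update_erase {β c : V → ℕ} {v : V} :
    Dset β (Function.update c v (β v)) = (Dset β c).erase v := by
  ext a
  by_cases h : a = v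
  · subst h
    simp [mem_Dset, Function.update_self, Finset.mem_erase]
  · simp [mem_Dset, Function.update_of_ne h, Finset.mem_erase, h]

lemma Reach.refl {L : V → Finset ℕ} (c : V → ℕ) : Reach L c c 0 := by
  exact ⟨fun _ => c, rfl, rfl, fun i hi => absurd hi (by omega)⟩

lemma Reach.single {L : V → Finset ℕ} {c c' : V → ℕ}
    (h : recolStep (⊤ : SimpleGraph V) L c c') : Reach L c c' 1 := by
  refine ⟨fun i => if i = 0 then c else c', by simp, by simp, ?_⟩
  intro i hi
  have : i = 0 := by omega
  subst this
  simpa using h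

lemma Reach.trans {L : V → Finset ℕ} {c₁ c₂ c₃ : V → ℕ} {k₁ k₂ : ℕ}
    (h1 : Reach L c₁ c₂ k₁) (h2 : Reach L c₂ c₃ k₂) : Reach L c₁ c₃ (k₁ + k₂) := by
  obtain ⟨f, hf0, hfk, hfs⟩ := h1
  obtain ⟨g, hg0, hgk, hgs⟩ := h2
  refine ⟨fun i => if i < k₁ then f i else g (i - k₁), ?_, ?_, ?_⟩
  · by_cases h : 0 < k₁
    · simpa [h] using hf0
    · have hk : k₁ = 0 := by omega
      subst hk
      simp only [Nat.lt_irrefl, if_neg (by omega : ¬ (0:ℕ) < 0), Nat.sub_zero, hg0,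
        ← hfk, hf0]
      simp
  · have hnot : ¬ (k₁ + k₂ < k₁) := by omega
    simp only [if_neg hnot]
    rw [show k₁ + k₂ - k₁ = k₂ by omega, hgk]
  · intro i hi
    by_cases h1' : i + 1 < k₁
    · have h0 : i < k₁ := by omega
      simp only [if_pos h0, if_pos h1']
      exact hfs i h0
    · by_cases h0 : i < k₁
      · have hik : i + 1 = k₁ := by omega
        simp only [if_pos h0, if_neg h1']
        rw [show i + 1 - k₁ = 0 by omega, hg0, ← hfk, ← hik]
        exact hfs i h0
      · have e1 : i + 1 - k₁ = (i - k₁) + 1 := by omega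
        simp only [if_neg h0, if_neg h1']
        rw [e1]
        exact hgs (i - k₁) (by omega)


lemma close_all {L : V → Finset ℕ} {β : V → ℕ} (hGβ : Good L β) :
    ∀ m : ℕ, ∀ c : V → ℕ, Good L c → (Dset β c).card ≤ m →
    ∃ (k : ℕ) (c' : V → ℕ), Reach L c c' k ∧ Good L c' ∧
      k + (Dset β c').card ≤ (Dset β c).card ∧ pal c' = pal β := by
  intro m
  induction m with
  | zero =>
    intro c hGc hcard
    have hD : Dset β c = ∅ := Finset.card_eq_zero.mp (by omega)
    have hcβ : c = β := by
      funext v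
      by_contra h
      have : v ∈ Dset β c := mem_Dset.mpr h
      simp [hD] at this
    exact ⟨0, c, Reach.refl c, hGc, by simp, by rw [hcβ]⟩
  | succ m ih =>
    intro c hGc hcard
    by_cases hPQ : pal c = pal β
    · exact ⟨0, c, Reach.refl c, hGc, by simp, hPQ⟩
    · have hcards : (pal c).card = (pal β).card := by
        rw [pal_card hGc.2, pal_card hGβ.2]
      have hnsub : ¬ pal β ⊆ pal c := fun hsub =>
        hPQ (Finset.eq_of_subset_of_card_le hsub hcards.le).symm
      obtain ⟨q, hqQ, hqP⟩ := Finset.not_subset.mp hnsub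
      obtain ⟨u, hu⟩ := mem_pal.mp hqQ
      have huD : u ∈ Dset β c :=
        mem_Dset.mpr (by rw [hu]; exact fun h => hqP (h ▸ self_mem_pal u))
      have hqL : q ∈ L u := hu ▸ hGβ.1 u
      have hstep := recol_update hGc hqL hqP
      have hG1 : Good L (Function.update c u q) := good_update hGc hqL hqP
      have hD1 : Dset β (Function.update c u q) = (Dset β c).erase u := by
        rw [← hu]; exact Dset_update_erase
      have hcard1 : (Dset β (Function.update c u q)).card ≤ m := by
        rw [hD1, Finset.card_erase_of_mem huD]
        have : 1 ≤ (Dset β c).card := Finset.card_pos.mpr ⟨u, huD⟩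
        omega
      obtain ⟨k, c', hR, hG', hk, hP'⟩ := ih (Function.update c u q) hG1 hcard1
      refine ⟨1 + k, c', (Reach.single hstep).trans hR, hG', ?_, hP'⟩
      rw [hD1, Finset.card_erase_of_mem huD] at hk
      have : 1 ≤ (Dset β c).card := Finset.card_pos.mpr ⟨u, huD⟩
      omega

/-- Unwind a chain of blocked vertices, never touching `w`. -/
lemma cascade {L : V → Finset ℕ} {β : V → ℕ} (hGβ : Good L β) :
    ∀ m : ℕ, ∀ (c : V → ℕ) (w x : V), Good L c → (Dset β c).card ≤ m →
    c w ∉ pal β → (∀ u, u ≠ w → c u ∈ pal β) →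
    (∀ v ∈ Dset β c, v ≠ w → L v = pal β) → β w ∈ pal c →
    x ∈ Dset β c → x ≠ w → β x ∉ pal c →
    ∃ (k : ℕ) (c' : V → ℕ), Reach L c c' k ∧ Good L c' ∧ 1 ≤ k ∧
      k + (Dset β c').card ≤ (Dset β c).card ∧ c' w = c w ∧
      (∀ u, u ≠ w → c' u ∈ pal β) ∧ (∀ v ∈ Dset β c', v ≠ w → L v = pal β) ∧
      β w ∉ pal c' := by
  intro m
  induction m with
  | zero =>
    intro c w x _ hcard _ _ _ _ hx _ _
    have : 1 ≤ (Dset β c).card := Finset.card_pos.mpr ⟨x, hx⟩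
    omega
  | succ m ih =>
    intro c w x hGc hcard hw1 hw2 hw3 hw4 hxD hxw hxP
    -- close x
    have hstep := recol_update hGc (hGβ.1 x) hxP
    set c₁ := Function.update c x (β x) with hc₁
    have hG₁ : Good L c₁ := good_update hGc (hGβ.1 x) hxP
    have hD₁ : Dset β c₁ = (Dset β c).erase x := Dset_update_erase
    have hcardD : 1 ≤ (Dset β c).card := Finset.card_pos.mpr ⟨x, hxD⟩
    have hcard₁ : (Dset β c₁).card = (Dset β c).card - 1 := by
      rw [hD₁, Finset.card_erase_of_mem hxD]
    have h₁w : c₁ w = c w := Function.update_of_ne (Ne.symm hxw) _ _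
    have h₁2 : ∀ u, u ≠ w → c₁ u ∈ pal β := by
      intro u hu
      by_cases h : u = x
      · subst h; rw [hc₁, Function.update_self]; exact self_mem_pal _
      · rw [hc₁, Function.update_of_ne h]; exact hw2 u hu
    have h₁3 : ∀ v ∈ Dset β c₁, v ≠ w → L v = pal β := by
      intro v hv hvw
      exact hw3 v (hD₁ ▸ hv |> Finset.mem_of_mem_erase) hvw
    have hcxQ : c x ∈ pal β := hw2 x hxw
    by_cases hqw : c x = β w
    · -- the freed colour is β w : the chain is finished
      have h₁4 : β w ∉ pal c₁ := by
        apply notMem_pal_update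
        · exact fun h => hxw (hGβ.2 h).symm
        · intro u hux h
          exact hux (hGc.2 (h.trans hqw.symm))
      refine ⟨1, c₁, Reach.single hstep, hG₁, le_refl 1, ?_, h₁w, h₁2, h₁3, h₁4⟩
      omega
    · -- the freed colour c x unblocks a new vertex x'
      obtain ⟨x', hx'⟩ := mem_pal.mp hcxQ   -- β x' = c x
      have hx'w : x' ≠ w := fun h => hqw (by rw [← hx', h])
      have hx'x : x' ≠ x := fun h => (mem_Dset.mp hxD) ((h ▸ hx').symm)
      have hx'D : x' ∈ Dset β c₁ := by
        rw [mem_Dset, hc₁, Function.update_of_ne hx'x, hx']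
        exact fun h => hx'x (hGc.2 h)
      have hx'P : β x' ∉ pal c₁ := by
        rw [hx']
        apply notMem_pal_update
        · exact mem_Dset.mp hxD
        · intro u hux h; exact hux (hGc.2 h)
      have h₁4 : β w ∈ pal c₁ := by
        obtain ⟨z, hz⟩ := mem_pal.mp hw4
        have hzx : z ≠ x := fun h => hqw (by rw [← hz, h])
        exact mem_pal.mpr ⟨z, by rw [hc₁, Function.update_of_ne hzx, hz]⟩
      obtain ⟨k, c', hR, hG', hk1, hk2, h'w, h'2, h'3, h'4⟩ :=
        ih c₁ w x' hG₁ (by omega) (h₁w ▸ hw1) h₁2 h₁3 h₁4 hx'D hx'w hx'P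
      refine ⟨1 + k, c', (Reach.single hstep).trans hR, hG', by omega, by omega,
        h'w.trans h₁w, h'2, h'3, h'4⟩

/-- With `w` parked on a colour outside `β`'s palette, and every other wrong
vertex having list equal to `β`'s palette, finish everything. -/
lemma rigid2 {L : V → Finset ℕ} {β : V → ℕ} (hGβ : Good L β) :
    ∀ m : ℕ, ∀ (c : V → ℕ) (w : V), Good L c → (Dset β c).card ≤ m →
    c w ∉ pal β → (∀ u, u ≠ w → c u ∈ pal β) →
    (∀ v ∈ Dset β c, v ≠ w → L v = pal β) → β w ∉ pal c →
    ∃ k : ℕ, Reach L c β k ∧ 2 * k + 1 ≤ 3 * (Dset β c).card := by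
  intro m
  induction m with
  | zero =>
    intro c w _ hcard hw1 _ _ _
    have hwD : w ∈ Dset β c := mem_Dset.mpr (fun h => hw1 (h ▸ self_mem_pal w))
    have : 1 ≤ (Dset β c).card := Finset.card_pos.mpr ⟨w, hwD⟩
    omega
  | succ m ih =>
    intro c w hGc hcard hw1 hw2 hw3 hw4
    have hwD : w ∈ Dset β c := mem_Dset.mpr (fun h => hw1 (h ▸ self_mem_pal w))
    by_cases hD : ∀ v ∈ Dset β c, v = w
    · -- D = {w} : close w and we are at β
      have hupd : Function.update c w (β w) = β := by
        funext u
        by_cases h : u = w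
        · subst h; rw [Function.update_self]
        · rw [Function.update_of_ne h]
          by_contra hne
          exact h (hD u (mem_Dset.mpr hne))
      have hstep := recol_update hGc (hGβ.1 w) hw4
      refine ⟨1, ?_, ?_⟩
      · rw [← hupd]; exact Reach.single hstep
      · have : 1 ≤ (Dset β c).card := Finset.card_pos.mpr ⟨w, hwD⟩
        omega
    · push_neg at hD
      obtain ⟨v, hvD, hvw⟩ := hD
      have hcvQ : c v ∈ pal β := hw2 v hvw
      have hβwL : β w ∈ L v := by rw [hw3 v hvD hvw]; exact self_mem_pal w
      have hcvβw : c v ≠ β w := fun h => hw4 (h ▸ self_mem_pal v)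
      -- step 1 : recolour v to β w (break a cycle using the reusable colour β w)
      have hstep₁ := recol_update hGc hβwL hw4
      set c₁ := Function.update c v (β w) with hc₁
      have hG₁ : Good L c₁ := good_update hGc hβwL hw4
      have hD₁ : Dset β c₁ = Dset β c := by
        rw [hc₁, Dset_update_insert (fun h => hvw (hGβ.2 h).symm)]
        exact Finset.insert_eq_self.mpr hvD
      -- the vertex x blocked by v
      obtain ⟨x, hx⟩ := mem_pal.mp hcvQ   -- β x = c v
      have hxv : x ≠ v := fun h => (mem_Dset.mp hvD) ((h ▸ hx).symm)
      have hxw : x ≠ w := fun h => hw4 (by rw [← h, hx]; exact self_mem_pal v)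
      have hxDc : x ∈ Dset β c := by
        rw [mem_Dset, hx]
        exact fun h => hxv (hGc.2 h)
      have hxD₁ : x ∈ Dset β c₁ := hD₁ ▸ hxDc
      have hβxP₁ : β x ∉ pal c₁ := by
        rw [hx, hc₁]
        apply notMem_pal_update hcvβw
        intro u huv h; exact huv (hGc.2 h)
      -- step 2 : close x
      have hstep₂ := recol_update hG₁ (hGβ.1 x) hβxP₁
      set c₂ := Function.update c₁ x (β x) with hc₂
      have hG₂ : Good L c₂ := good_update hG₁ (hGβ.1 x) hβxP₁
      have hD₂ : Dset β c₂ = (Dset β c).erase x := by rw [hc₂, Dset_update_erase, hD₁]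
      have hcard₂ : (Dset β c₂).card = (Dset β c).card - 1 := by
        rw [hD₂, Finset.card_erase_of_mem hxDc]
      -- the vertex x' blocked by x
      have hcxQ : c x ∈ pal β := hw2 x hxw
      have hcxβw : c x ≠ β w := fun h => hw4 (h ▸ self_mem_pal x)
      obtain ⟨x', hx'⟩ := mem_pal.mp hcxQ  -- β x' = c x
      have hx'w : x' ≠ w := fun h => hcxβw (by rw [← hx', h])
      have hx'x : x' ≠ x := fun h => (mem_Dset.mp hxDc) ((h ▸ hx').symm)
      have hc₁x : c₁ x = c x := by rw [hc₁, Function.update_of_ne hxv]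
      have hx'D₂ : x' ∈ Dset β c₂ := by
        rw [mem_Dset, hc₂, Function.update_of_ne hx'x, hx']
        by_cases h : x' = v
        · subst h
          rw [hc₁, Function.update_self]
          exact fun hh => hcxβw hh.symm
        · rw [hc₁, Function.update_of_ne h]
          exact fun hh => hx'x (hGc.2 hh)
      have hβx'P₂ : β x' ∉ pal c₂ := by
        rw [hx', hc₂]
        apply notMem_pal_update
        · exact fun h => hxv (hGc.2 (h.trans hx))
        · intro u hux h
          by_cases huv : u = v
          · subst huv; rw [hc₁, Function.update_self] at h
            exact hcxβw h.symm
          · rw [hc₁, Function.update_of_ne huv] at h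
            exact hux (hGc.2 h)
      -- hypotheses for the cascade at c₂
      have h2w : c₂ w = c w := by
        rw [hc₂, Function.update_of_ne (Ne.symm hxw), hc₁,
          Function.update_of_ne (Ne.symm hvw)]
      have h2Q : ∀ u, u ≠ w → c₂ u ∈ pal β := by
        intro u hu
        by_cases h : u = x
        · subst h; rw [hc₂, Function.update_self]; exact self_mem_pal _
        · rw [hc₂, Function.update_of_ne h]
          by_cases h' : u = v
          · subst h'; rw [hc₁, Function.update_self]; exact self_mem_pal _
          · rw [hc₁, Function.update_of_ne h']; exact hw2 u hu
      have h2L : ∀ v' ∈ Dset β c₂, v' ≠ w → L v' = pal β := by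
        intro v' hv' hv'w
        exact hw3 v' (hD₂ ▸ hv' |> Finset.mem_of_mem_erase) hv'w
      have h2βw : β w ∈ pal c₂ := by
        refine mem_pal.mpr ⟨v, ?_⟩
        rw [hc₂, Function.update_of_ne (Ne.symm hxv), hc₁, Function.update_self]
      obtain ⟨k₃, c₃, hR₃, hG₃, hk₃1, hk₃2, h₃w, h₃2, h₃3, h₃4⟩ :=
        cascade hGβ ((Dset β c₂).card) c₂ w x' hG₂ le_rfl
          (by rw [h2w]; exact hw1) h2Q h2L h2βw hx'D₂ hx'w hβx'P₂
      -- recurse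
      have hvD' : 2 ≤ (Dset β c).card := by
        have hsub : ({v, w} : Finset V) ⊆ Dset β c := by
          intro a ha
          rcases Finset.mem_insert.mp ha with rfl | ha
          · exact hvD
          · rw [Finset.mem_singleton.mp ha]; exact hwD
        have h2 : ({v, w} : Finset V).card = 2 := by
          rw [Finset.card_insert_of_notMem (by simp [hvw]), Finset.card_singleton]
        have := Finset.card_le_card hsub
        omega
      have hcard₃ : (Dset β c₃).card ≤ m := by omega
      obtain ⟨k₅, hR₅, hk₅⟩ :=
        ih c₃ w hG₃ hcard₃ (by rw [h₃w, h2w]; exact hw1) h₃2 h₃3 h₃4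
      refine ⟨1 + (1 + (k₃ + k₅)),
        (Reach.single hstep₁).trans ((Reach.single hstep₂).trans (hR₃.trans hR₅)), ?_⟩
      omega

/-- Main induction: from any good colouring with palette equal to β's palette. -/
lemma outer {L : V → Finset ℕ} {β : V → ℕ} {n : ℕ} (hGβ : Good L β)
    (hcardV : Fintype.card V = n) (hL : ∀ v, n ≤ (L v).card)
    (hU : n < (Finset.univ.biUnion L).card) :
    ∀ m : ℕ, ∀ c : V → ℕ, Good L c → (Dset β c).card ≤ m → pal c = pal β →
    ∃ k : ℕ, Reach L c β k ∧ 2 * k ≤ 3 * (Dset β c).card + 4 := by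
  intro m
  induction m with
  | zero =>
    intro c hGc hcard _
    have hD : Dset β c = ∅ := Finset.card_eq_zero.mp (by omega)
    have hcβ : c = β := by
      funext v
      by_contra h
      have : v ∈ Dset β c := mem_Dset.mpr h
      simp [hD] at this
    exact ⟨0, hcβ ▸ Reach.refl c, by simp⟩
  | succ m ih =>
    intro c hGc hcard hPQ
    by_cases hDe : Dset β c = ∅
    · have hcβ : c = β := by
        funext v
        by_contra h
        have : v ∈ Dset β c := mem_Dset.mpr h
        simp [hDe] at this
      exact ⟨0, hcβ ▸ Reach.refl c, by simp⟩
    by_cases hbr : ∃ v ∈ Dset β c, ∃ b ∈ L v, b ∉ pal c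
    · -- break a cycle with a free colour
      obtain ⟨v, hvD, b, hbL, hbP⟩ := hbr
      have hbQ : b ∉ pal β := hPQ ▸ hbP
      have hbβv : b ≠ β v := fun h => hbQ (h ▸ self_mem_pal v)
      -- step 1 : v → b
      have hstep₁ := recol_update hGc hbL hbP
      set c₁ := Function.update c v b with hc₁
      have hG₁ : Good L c₁ := good_update hGc hbL hbP
      have hD₁ : Dset β c₁ = Dset β c := by
        rw [hc₁, Dset_update_insert hbβv]
        exact Finset.insert_eq_self.mpr hvD
      -- x, the vertex blocked by v
      have hcvQ : c v ∈ pal β := hPQ ▸ self_mem_pal v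
      obtain ⟨x, hx⟩ := mem_pal.mp hcvQ   -- β x = c v
      have hxv : x ≠ v := fun h => (mem_Dset.mp hvD) ((h ▸ hx).symm)
      have hxDc : x ∈ Dset β c := by
        rw [mem_Dset, hx]
        exact fun h => hxv (hGc.2 h)
      have hxD₁ : x ∈ Dset β c₁ := hD₁ ▸ hxDc
      have hβxP₁ : β x ∉ pal c₁ := by
        rw [hx, hc₁]
        apply notMem_pal_update
        · exact fun h => hbP (h ▸ self_mem_pal v)
        · intro u huv h; exact huv (hGc.2 h)
      -- step 2 : close x
      have hstep₂ := recol_update hG₁ (hGβ.1 x) hβxP₁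
      set c₂ := Function.update c₁ x (β x) with hc₂
      have hG₂ : Good L c₂ := good_update hG₁ (hGβ.1 x) hβxP₁
      have hD₂ : Dset β c₂ = (Dset β c).erase x := by rw [hc₂, Dset_update_erase, hD₁]
      have hcard₂ : (Dset β c₂).card = (Dset β c).card - 1 := by
        rw [hD₂, Finset.card_erase_of_mem hxDc]
      -- x₂, the vertex blocked by x
      have hcxQ : c x ∈ pal β := hPQ ▸ self_mem_pal x
      obtain ⟨x₂, hx₂⟩ := mem_pal.mp hcxQ  -- β x₂ = c x
      have hx₂x : x₂ ≠ x := fun h => (mem_Dset.mp hxDc) ((h ▸ hx₂).symm)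
      have hbcx : b ≠ c x := fun h => hbP (h ▸ self_mem_pal x)
      have hx₂D₂ : x₂ ∈ Dset β c₂ := by
        rw [mem_Dset, hc₂, Function.update_of_ne hx₂x, hx₂]
        by_cases h : x₂ = v
        · subst h
          rw [hc₁, Function.update_self]
          exact hbcx
        · rw [hc₁, Function.update_of_ne h]
          exact fun hh => hx₂x (hGc.2 hh)
      have hβx₂P₂ : β x₂ ∉ pal c₂ := by
        rw [hx₂, hc₂]
        apply notMem_pal_update
        · exact fun h => hxv (hGc.2 (h.trans hx))
        · intro u hux h
          by_cases huv : u = v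
          · subst huv; rw [hc₁, Function.update_self] at h
            exact hbcx h
          · rw [hc₁, Function.update_of_ne huv] at h
            exact hux (hGc.2 h)
      -- step 3 : close x₂
      have hstep₃ := recol_update hG₂ (hGβ.1 x₂) hβx₂P₂
      set c₃ := Function.update c₂ x₂ (β x₂) with hc₃
      have hG₃ : Good L c₃ := good_update hG₂ (hGβ.1 x₂) hβx₂P₂
      have hD₃ : Dset β c₃ = (Dset β c₂).erase x₂ := by rw [hc₃, Dset_update_erase]
      have hcard₃ : (Dset β c₃).card = (Dset β c₂).card - 1 := by
        rw [hD₃, Finset.card_erase_of_mem hx₂D₂]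
      -- close everything closable
      obtain ⟨k₄, c₄, hR₄, hG₄, hk₄, hP₄⟩ := close_all hGβ ((Dset β c₃).card) c₃ hG₃ le_rfl
      -- recurse
      have hcard₂pos : 1 ≤ (Dset β c₂).card := Finset.card_pos.mpr ⟨x₂, hx₂D₂⟩
      have hcardpos : 1 ≤ (Dset β c).card := Finset.card_pos.mpr ⟨v, hvD⟩
      obtain ⟨k₅, hR₅, hk₅⟩ := ih c₄ hG₄ (by omega) hP₄
      refine ⟨1 + (1 + (1 + (k₄ + k₅))),
        (Reach.single hstep₁).trans ((Reach.single hstep₂).trans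
          ((Reach.single hstep₃).trans (hR₄.trans hR₅))), ?_⟩
      omega
    · -- stuck : all lists of wrong vertices equal the palette
      push_neg at hbr
      have hlist : ∀ v ∈ Dset β c, L v = pal β := by
        intro v hv
        have hsub : L v ⊆ pal c := fun b hb => hbr v hv b hb
        rw [hPQ] at hsub
        refine Finset.eq_of_subset_of_card_le hsub ?_
        rw [pal_card hGβ.2, hcardV]
        exact hL v
      -- a colour outside β's palette
      have hQcard : (pal β).card = n := by rw [pal_card hGβ.2, hcardV]
      have hnsub : ¬ Finset.univ.biUnion L ⊆ pal β := fun hsub => by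
        have := Finset.card_le_card hsub
        omega
      obtain ⟨a, haB, haQ⟩ := Finset.not_subset.mp hnsub
      obtain ⟨w, -, haL⟩ := Finset.mem_biUnion.mp haB
      have hwD : w ∉ Dset β c := fun h => haQ (hlist w h ▸ haL)
      have hcw : c w = β w := by
        by_contra h
        exact hwD (mem_Dset.mpr h)
      have haP : a ∉ pal c := hPQ ▸ haQ
      -- step : w → a
      have hstep₁ := recol_update hGc haL haP
      set c₁ := Function.update c w a with hc₁
      have hG₁ : Good L c₁ := good_update hGc haL haP
      have haβw : a ≠ β w := fun h => haQ (h ▸ self_mem_pal w)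
      have hD₁ : Dset β c₁ = insert w (Dset β c) := by
        rw [hc₁, Dset_update_insert haβw]
      have hcard₁ : (Dset β c₁).card = (Dset β c).card + 1 := by
        rw [hD₁, Finset.card_insert_of_notMem hwD]
      obtain ⟨k', hR', hk'⟩ := rigid2 hGβ ((Dset β c₁).card) c₁ w hG₁ le_rfl
        (by rw [hc₁, Function.update_self]; exact haQ)
        (by
          intro u hu
          rw [hc₁, Function.update_of_ne hu]
          exact hPQ ▸ self_mem_pal u)
        (by
          intro v hv hvw
          have : v ∈ Dset β c := by
            have := hD₁ ▸ hv
            rcases Finset.mem_insert.mp this with h | h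
            · exact absurd h hvw
            · exact h
          exact hlist v this)
        (by
          rw [← hcw, hc₁]
          apply notMem_pal_update (Ne.symm (hcw ▸ haβw))
          intro u huw h
          exact huw (hGc.2 h))
      exact ⟨1 + k', (Reach.single hstep₁).trans hR', by omega⟩

end Stmt11

theorem stmt11 {V : Type*} [Fintype V] [DecidableEq V] (n : ℕ) (hn : 2 ≤ n)
    (hcard : Fintype.card V = n) (L : V → Finset ℕ)
    (hL : ∀ v, n ≤ (L v).card)
    (hU : n < (Finset.univ.biUnion L).card)
    (α β : V → ℕ)
    (hα : properL (⊤ : SimpleGraph V) L α) (hβ : properL (⊤ : SimpleGraph V) L β) :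
    ∃ (k : ℕ) (f : ℕ → V → ℕ), 2 * k ≤ 3 * n + 4 ∧ f 0 = α ∧ f k = β ∧
      ∀ i < k, recolStep (⊤ : SimpleGraph V) L (f i) (f (i + 1)) := by
  have hGα : Stmt11.Good L α := Stmt11.properL_top_iff.mp hα
  have hGβ : Stmt11.Good L β := Stmt11.properL_top_iff.mp hβ
  obtain ⟨k₀, c', hR₀, hG', hk₀, hP'⟩ :=
    Stmt11.close_all hGβ ((Stmt11.Dset β α).card) α hGα le_rfl
  obtain ⟨k₁, hR₁, hk₁⟩ :=
    Stmt11.outer hGβ hcard hL hU ((Stmt11.Dset β c').card) c' hG' le_rfl hP'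
  obtain ⟨f, hf0, hfk, hfs⟩ := hR₀.trans hR₁
  refine ⟨k₀ + k₁, f, ?_, hf0, hfk, hfs⟩
  have h1 : (Stmt11.Dset β α).card ≤ n := hcard ▸ Stmt11.Dset_card_le
  omega
end
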